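/- Let V be a real inner product space, let k ≥ 2, let m₁, …, m_k be integers with m_i ≥ 2 for all i, let c, λ be real numbers, and let η₁, …, η_k ∈ V be pairwise distinct vectors satisfying ⟨η_i, η_j⟩ = −c for all i ≠ j and (m_i − 1)(c + ‖η_i‖²) = λ for all i. Then λ > 0. -/

import Mathlib

/-!
Write `aᵢ = c + ‖ηᵢ‖²`. For two distinct normals, `‖η₁ - η₂‖² = a₁ + a₂` because
`⟪η₁, η₂⟫ = -c`, so some `aᵢ` is positive, and then `λ = (mᵢ - 1) aᵢ > 0`.
-/

open RealInnerProductSpace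

theorem norm_sq_add_norm_sq_add_two_mul_pos_of_inner_eq_neg {V : Type*}
    [NormedAddCommGroup V] [InnerProductSpace ℝ V] {x y : V} {c : ℝ} (hxy : x ≠ y)
    (h : ⟪x, y⟫ = -c) : 0 < ‖x‖ ^ 2 + ‖y‖ ^ 2 + 2 * c := by
  have hdist : 0 < ‖x - y‖ ^ 2 := pow_pos (norm_pos_iff.2 (sub_ne_zero.2 hxy)) 2
  rw [norm_sub_sq_real, h] at hdist
  linarith

/-- Final assertion of Lemma 4.2: if all `m i ≥ 2`, the principal normals are
pairwise distinct, `⟪η i, η j⟫ = -c` for `i ≠ j` and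
`(m i - 1)(c + ‖η i‖²) = λ`, then `λ > 0`. -/
theorem ricci_pos_of_all_factors_ge_two
    {V : Type*} [NormedAddCommGroup V] [InnerProductSpace ℝ V]
    (k : ℕ) (hk : 2 ≤ k) (m : Fin k → ℕ) (hm : ∀ i, 2 ≤ m i)
    (c lam : ℝ) (η : Fin k → V) (hdist : Function.Injective η)
    (hinner : ∀ i j, i ≠ j → ⟪η i, η j⟫ = -c)
    (heq : ∀ i, ((m i : ℝ) - 1) * (c + ‖η i‖ ^ 2) = lam) :
    0 < lam := by
  let i : Fin k := ⟨0, by omega⟩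
  let j : Fin k := ⟨1, by omega⟩
  have hij : i ≠ j := by simp [i, j, Fin.ext_iff]
  have hsum := norm_sq_add_norm_sq_add_two_mul_pos_of_inner_eq_neg
    (hdist.ne hij) (hinner i j hij)
  have hfactor_pos (l : Fin k) : 0 < (m l : ℝ) - 1 := by
    have : (2 : ℝ) ≤ m l := by exact_mod_cast hm l
    linarith
  by_cases hi : 0 < c + ‖η i‖ ^ 2
  · exact heq i ▸ mul_pos (hfactor_pos i) hi
  · exact heq j ▸ mul_pos (hfactor_pos j) (by linarith)
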